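/- If G[S] is a locally densest subgraph of G, then for every edge (u,v) ∈ E with u ∈ S and v ∈ V∖S, the compact numbers satisfy φ(u) > φ(v). -/

import Mathlib

open Finset

variable {V : Type*} [Fintype V] [DecidableEq V]

/-- Number of edges of `G` with both endpoints in `S`. -/
def edgeCount (G : SimpleGraph V) [DecidableRel G.Adj] (S : Finset V) : ℕ :=
  (G.edgeFinset.filter fun e => ∀ v ∈ e, v ∈ S).card

open scoped Classical in
/-- edges inside `W` touching `U` -/
noncomputable def cutCount (G : SimpleGraph V) [DecidableRel G.Adj] (W U : Finset V) : ℕ :=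
  (G.edgeFinset.filter fun e => (∀ x ∈ e, x ∈ W) ∧ ∃ x ∈ e, x ∈ U).card

lemma edgeCount_mono (G : SimpleGraph V) [DecidableRel G.Adj] {S T : Finset V} (h : S ⊆ T) :
    edgeCount G S ≤ edgeCount G T := by
  apply Finset.card_le_card
  exact Finset.monotone_filter_right _ (fun e _ he x hx => h (he x hx))

lemma edgeCount_split (G : SimpleGraph V) [DecidableRel G.Adj] (W U : Finset V) :
    edgeCount G W = cutCount G W U + edgeCount G (W \ U) := by
  classical
  unfold edgeCount cutCount
  rw [← Finset.card_filter_add_card_filter_not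
    (p := fun e : Sym2 V => ∃ x ∈ e, x ∈ U) (s := G.edgeFinset.filter fun e => ∀ v ∈ e, v ∈ W)]
  congr 2
  · rw [Finset.filter_filter]
  · rw [Finset.filter_filter]
    apply Finset.filter_congr
    intro e _
    simp only [Finset.mem_sdiff]
    constructor
    · rintro ⟨h1, h2⟩ x hx
      push_neg at h2
      exact ⟨h1 x hx, h2 x hx⟩
    · intro h
      exact ⟨fun x hx => (h x hx).1, by push_neg; intro x hx; exact (h x hx).2⟩

lemma edgeCount_split_real (G : SimpleGraph V) [DecidableRel G.Adj] (W U : Finset V) :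
    (edgeCount G W : ℝ) - (edgeCount G (W \ U) : ℝ) = (cutCount G W U : ℝ) := by
  rw [edgeCount_split G W U]
  push_cast
  ring

lemma cut_add_le (G : SimpleGraph V) [DecidableRel G.Adj] (S T U : Finset V) :
    cutCount G S (U ∩ S) + cutCount G T (U \ S) ≤ cutCount G (S ∪ T) U := by
  classical
  unfold cutCount
  rw [← Finset.card_union_of_disjoint]
  · apply Finset.card_le_card
    intro e he
    simp only [Finset.mem_union, Finset.mem_filter] at he ⊢
    rcases he with ⟨he, h1, x, hx, hxU⟩ | ⟨he, h1, x, hx, hxU⟩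
    · exact ⟨he, fun y hy => Or.inl (h1 y hy),
        x, hx, (Finset.mem_inter.mp hxU).1⟩
    · exact ⟨he, fun y hy => Or.inr (h1 y hy),
        x, hx, (Finset.mem_sdiff.mp hxU).1⟩
  · rw [Finset.disjoint_left]
    rintro e he1 he2
    simp only [Finset.mem_filter] at he1 he2
    obtain ⟨_, hS, _⟩ := he1
    obtain ⟨_, _, x, hx, hxU⟩ := he2
    exact (Finset.mem_sdiff.mp hxU).2 (hS x hx)

/-- Edge density |E(S)|/|S| of the induced subgraph G[S]. -/
noncomputable def density (G : SimpleGraph V) [DecidableRel G.Adj] (S : Finset V) : ℝ :=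
  (edgeCount G S : ℝ) / (S.card : ℝ)

/-- `G[S]` is ρ-compact: connected, and removing any nonempty `U ⊆ S`
removes at least `ρ * |U|` edges. -/
def IsCompactSub (G : SimpleGraph V) [DecidableRel G.Adj] (ρ : ℝ) (S : Finset V) : Prop :=
  0 ≤ ρ ∧ (G.induce (S : Set V)).Connected ∧
  ∀ U ⊆ S, U.Nonempty →
    ρ * (U.card : ℝ) ≤ (edgeCount G S : ℝ) - (edgeCount G (S \ U) : ℝ)

/-- `G[S]` is a locally densest subgraph: a maximal `density G S`-compact subgraph. -/
def IsLDS (G : SimpleGraph V) [DecidableRel G.Adj] (S : Finset V) : Prop :=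
  IsCompactSub G (density G S) S ∧
  ∀ S' : Finset V, S ⊂ S' → ¬ IsCompactSub G (density G S) S'

/-- The compact number of `u`: the largest ρ such that `u`
lies in a ρ-compact subgraph of `G`. -/
noncomputable def compactNum (G : SimpleGraph V) [DecidableRel G.Adj] (u : V) : ℝ :=
  sSup {ρ : ℝ | ∃ S : Finset V, u ∈ S ∧ IsCompactSub G ρ S}

lemma induce_singleton_connected (G : SimpleGraph V) (v : V) :
    (G.induce ({v} : Set V)).Connected := by
  rw [SimpleGraph.connected_iff]
  refine ⟨fun a b => ?_, ⟨⟨v, rfl⟩⟩⟩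
  have : a = b := Subtype.ext (a.2.trans b.2.symm)
  exact this ▸ SimpleGraph.Reachable.refl _

lemma zero_compact_singleton (G : SimpleGraph V) [DecidableRel G.Adj] (v : V) :
    IsCompactSub G 0 ({v} : Finset V) := by
  refine ⟨le_refl 0, ?_, ?_⟩
  · have := induce_singleton_connected G v
    have hcoe : (({v} : Finset V) : Set V) = ({v} : Set V) := by simp
    rwa [hcoe]
  · intro U _ _
    rw [zero_mul, sub_nonneg, Nat.cast_le]
    exact edgeCount_mono G (Finset.sdiff_subset)

lemma compact_le_bound (G : SimpleGraph V) [DecidableRel G.Adj] {ρ : ℝ} {T : Finset V}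
    (h : IsCompactSub G ρ T) : ρ ≤ (G.edgeFinset.card : ℝ) := by
  obtain ⟨h0, hcon, hcomp⟩ := h
  have hne : T.Nonempty := by
    obtain ⟨⟨x, hx⟩⟩ := hcon.nonempty
    exact ⟨x, by exact_mod_cast hx⟩
  have h1 : ρ * (T.card : ℝ) ≤ (edgeCount G T : ℝ) - (edgeCount G (T \ T) : ℝ) :=
    hcomp T le_rfl hne
  have h2 : ρ ≤ ρ * (T.card : ℝ) := by
    have : (1:ℝ) ≤ (T.card : ℝ) := by exact_mod_cast Finset.card_pos.mpr hne
    nlinarith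
  have h3 : (edgeCount G T : ℝ) ≤ (G.edgeFinset.card : ℝ) := by
    exact_mod_cast Finset.card_le_card (Finset.filter_subset _ _)
  have h4 : (0 : ℝ) ≤ (edgeCount G (T \ T) : ℝ) := Nat.cast_nonneg _
  linarith

lemma density_nonneg (G : SimpleGraph V) [DecidableRel G.Adj] (S : Finset V) :
    0 ≤ density G S :=
  div_nonneg (Nat.cast_nonneg _) (Nat.cast_nonneg _)

lemma union_compact (G : SimpleGraph V) [DecidableRel G.Adj] {S T : Finset V} {ρ : ℝ}
    (hS : IsCompactSub G (density G S) S) (hT : IsCompactSub G ρ T)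
    (hρ : density G S ≤ ρ) {u v : V} (hu : u ∈ S) (hv : v ∈ T) (hadj : G.Adj u v) :
    IsCompactSub G (density G S) (S ∪ T) := by
  obtain ⟨hd0, hScon, hScomp⟩ := hS
  obtain ⟨-, hTcon, hTcomp⟩ := hT
  refine ⟨hd0, ?_, ?_⟩
  · have := SimpleGraph.connected_induce_union hScon.preconnected hTcon.preconnected
      (Finset.mem_coe.mpr hu) (Finset.mem_coe.mpr hv) hadj
    rwa [← Finset.coe_union] at this
  · intro U hUsub hUne
    rw [edgeCount_split_real]
    have h1 : density G S * (((U ∩ S)).card : ℝ) ≤ (cutCount G S (U ∩ S) : ℝ) := by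
      rcases (U ∩ S).eq_empty_or_nonempty with he | hne
      · simp [he]
      · rw [← edgeCount_split_real]
        exact hScomp _ Finset.inter_subset_right hne
    have h2 : density G S * (((U \ S)).card : ℝ) ≤ (cutCount G T (U \ S) : ℝ) := by
      rcases (U \ S).eq_empty_or_nonempty with he | hne
      · simp [he]
      · have hsub : U \ S ⊆ T := by
          intro x hx
          rcases Finset.mem_union.mp (hUsub (Finset.mem_sdiff.mp hx).1) with h | h
          · exact absurd h (Finset.mem_sdiff.mp hx).2
          · exact h
        calc density G S * (((U \ S)).card : ℝ) ≤ ρ * (((U \ S)).card : ℝ) :=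
              mul_le_mul_of_nonneg_right hρ (Nat.cast_nonneg _)
          _ ≤ _ := by rw [← edgeCount_split_real]; exact hTcomp _ hsub hne
    have hcard : (U.card : ℝ) = ((U ∩ S).card : ℝ) + ((U \ S).card : ℝ) := by
      rw [← Nat.cast_add, Finset.card_inter_add_card_sdiff]
    have hkey : (cutCount G S (U ∩ S) : ℝ) + (cutCount G T (U \ S) : ℝ)
        ≤ (cutCount G (S ∪ T) U : ℝ) := by
      exact_mod_cast cut_add_le G S T U
    rw [hcard, mul_add]
    linarith

lemma isClosed_compactSet (G : SimpleGraph V) [DecidableRel G.Adj] (T : Finset V) :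
    IsClosed {ρ : ℝ | IsCompactSub G ρ T} := by
  by_cases hc : (G.induce (T : Set V)).Connected
  · have heq : {ρ : ℝ | IsCompactSub G ρ T} = {ρ : ℝ | 0 ≤ ρ} ∩
        ⋂ (U : Finset V) (_ : U ⊆ T) (_ : U.Nonempty),
          {ρ : ℝ | ρ * (U.card : ℝ) ≤ (edgeCount G T : ℝ) - (edgeCount G (T \ U) : ℝ)} := by
      ext ρ
      simp [IsCompactSub, hc, Set.mem_iInter]
    rw [heq]
    refine (isClosed_le continuous_const continuous_id).inter ?_
    exact isClosed_iInter fun U => isClosed_iInter fun _ => isClosed_iInter fun _ =>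
      isClosed_le (continuous_id.mul continuous_const) continuous_const
  · have heq : {ρ : ℝ | IsCompactSub G ρ T} = ∅ := by
      ext ρ; simp [IsCompactSub, hc]
    rw [heq]; exact isClosed_empty

theorem lds_boundary_compactNum_lt' (G : SimpleGraph V) [DecidableRel G.Adj]
    (S : Finset V) (h : IsLDS G S) :
    ∀ u ∈ S, ∀ v ∉ S, G.Adj u v → compactNum G u > compactNum G v := by
  intro u hu v hv hadj
  set Ru := {ρ : ℝ | ∃ T : Finset V, u ∈ T ∧ IsCompactSub G ρ T} with hRu
  set Rv := {ρ : ℝ | ∃ T : Finset V, v ∈ T ∧ IsCompactSub G ρ T} with hRv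
  have hbddu : BddAbove Ru := ⟨(G.edgeFinset.card : ℝ), fun ρ ⟨T, _, hT⟩ => compact_le_bound G hT⟩
  have h1 : density G S ≤ compactNum G u := le_csSup hbddu ⟨S, hu, h.1⟩
  -- Rv is compact
  have hclosed : IsClosed Rv := by
    have : Rv = ⋃ (T : Finset V), {ρ : ℝ | v ∈ T ∧ IsCompactSub G ρ T} := by
      ext ρ; simp [hRv, Set.mem_iUnion]
    rw [this]
    refine isClosed_iUnion_of_finite fun T => ?_
    by_cases hvT : v ∈ T
    · have : {ρ : ℝ | v ∈ T ∧ IsCompactSub G ρ T} = {ρ : ℝ | IsCompactSub G ρ T} := by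
        ext ρ; simp [hvT]
      rw [this]; exact isClosed_compactSet G T
    · have : {ρ : ℝ | v ∈ T ∧ IsCompactSub G ρ T} = ∅ := by
        ext ρ; simp [hvT]
      rw [this]; exact isClosed_empty
  have hcompact : IsCompact Rv := by
    refine IsCompact.of_isClosed_subset (isCompact_Icc (a := (0:ℝ)) (b := (G.edgeFinset.card : ℝ)))
      hclosed ?_
    rintro ρ ⟨T, _, hT⟩
    exact ⟨hT.1, compact_le_bound G hT⟩
  have hne : Rv.Nonempty := ⟨0, {v}, Finset.mem_singleton_self v, zero_compact_singleton G v⟩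
  have hmem : compactNum G v ∈ Rv := hcompact.sSup_mem hne
  obtain ⟨T, hvT, hTc⟩ := hmem
  -- suppose compactNum G v ≥ density G S; derive contradiction
  by_contra hcon
  push_neg at hcon
  have hge : density G S ≤ compactNum G v := le_trans h1 hcon
  have hunion : IsCompactSub G (density G S) (S ∪ T) :=
    union_compact G h.1 hTc hge hu hvT hadj
  have hssub : S ⊂ S ∪ T := by
    refine Finset.ssubset_iff_of_subset Finset.subset_union_left |>.mpr
      ⟨v, Finset.mem_union_right _ hvT, hv⟩
  exact h.2 (S ∪ T) hssub hunion

/-- boundary edges of an LDS point to vertices of strictly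
smaller compact number. -/
theorem lds_boundary_compactNum_lt (G : SimpleGraph V) [DecidableRel G.Adj]
    (S : Finset V) (h : IsLDS G S) :
    ∀ u ∈ S, ∀ v ∉ S, G.Adj u v → compactNum G u > compactNum G v := by
  exact lds_boundary_compactNum_lt' G S h
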